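/- Let Q₂(r, θ) = −[a²(1 + αr·cosθ)²·sin²θ·H(r)·K(θ)]/[(αr·cosθ − 1)⁴·(r² + a²cos²θ)·m²·(a²α² + 1)], where H(r) = (Λ/3 + α²)r⁴ − 2mα²r³ + (a²α² + a²Λ/3 − 1)r² + 2mr − a² and K(θ) = 1 + a²(Λ/3 + α²)cos²θ − 2αm·cosθ; this is the Abdelqader–Lake invariant Q₂ of the accelerating Kerr black hole in (anti-)de Sitter spacetime. If a ≠ 0, m ≠ 0, θ ∈ (0, π), αr·cosθ ≠ 1 and r² + a²cos²θ > 0, then Q₂(r, θ) = 0 if and only if H(r) = 0 or αr·cosθ = −1 or K(θ) = 0. In particular Q₂ vanishes at every root of H, i.e. at the event, Cauchy and acceleration horizons of the accelerating rotating black hole with Λ ≠ 0. -/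
import Mathlib


noncomputable section

/-- The horizon quartic
`H(r) = (Λ/3 + α²)r⁴ − 2mα²r³ + (a²α² + a²Λ/3 − 1)r² + 2mr − a²`
of the accelerating Kerr–(anti-)de Sitter black hole; its real roots are the event,
Cauchy and acceleration horizons. -/
def accelH (a m Λ α r : ℝ) : ℝ :=
  (Λ / 3 + α ^ 2) * r ^ 4 - 2 * m * α ^ 2 * r ^ 3 +
    (a ^ 2 * α ^ 2 + a ^ 2 * Λ / 3 - 1) * r ^ 2 + 2 * m * r - a ^ 2

/-- The angular factor `K(θ) = 1 + a²(Λ/3 + α²)cos²θ − 2αm cosθ`. -/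
def accelK (a m Λ α θ : ℝ) : ℝ :=
  1 + a ^ 2 * (Λ / 3 + α ^ 2) * Real.cos θ ^ 2 - 2 * α * m * Real.cos θ

/-- The Abdelqader–Lake invariant `Q₂` of the accelerating Kerr black hole in
(anti-)de Sitter spacetime (closed form). -/
def accelQ2 (a m Λ α r θ : ℝ) : ℝ :=
  -(a ^ 2 * (1 + α * r * Real.cos θ) ^ 2 * Real.sin θ ^ 2 *
      accelH a m Λ α r * accelK a m Λ α θ) /
    ((α * r * Real.cos θ - 1) ^ 4 * (r ^ 2 + a ^ 2 * Real.cos θ ^ 2) * m ^ 2 *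
      (a ^ 2 * α ^ 2 + 1))

/-- For `a ≠ 0`, `m ≠ 0`, `θ ∈ (0, π)`, `αr cosθ ≠ 1` and
`r² + a²cos²θ > 0`, the invariant `Q₂` of the accelerating Kerr–(anti-)de Sitter black
hole vanishes iff `H(r) = 0` or `αr cosθ = −1` or `K(θ) = 0`; in particular it vanishes
at every root of `H`, i.e. at the event, Cauchy and acceleration horizons. -/
theorem accelQ2_horizon_detector (a m Λ α : ℝ) (ha : a ≠ 0) (hm : m ≠ 0) (r θ : ℝ)
    (hθ : θ ∈ Set.Ioo 0 Real.pi) (h1 : α * r * Real.cos θ ≠ 1)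
    (hρ : 0 < r ^ 2 + a ^ 2 * Real.cos θ ^ 2) :
    (accelQ2 a m Λ α r θ = 0 ↔
      accelH a m Λ α r = 0 ∨ α * r * Real.cos θ = -1 ∨ accelK a m Λ α θ = 0) ∧
    (accelH a m Λ α r = 0 → accelQ2 a m Λ α r θ = 0) := by

  have hsin : Real.sin θ ≠ 0 := ne_of_gt (Real.sin_pos_of_pos_of_lt_pi hθ.1 hθ.2)
  have hden : (α * r * Real.cos θ - 1) ^ 4 * (r ^ 2 + a ^ 2 * Real.cos θ ^ 2) * m ^ 2 *
      (a ^ 2 * α ^ 2 + 1) ≠ 0 := by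
    apply mul_ne_zero
    apply mul_ne_zero
    apply mul_ne_zero
    · exact pow_ne_zero _ (sub_ne_zero.mpr h1)
    · exact ne_of_gt hρ
    · exact pow_ne_zero _ hm
    · positivity
  constructor
  · rw [accelQ2, div_eq_zero_iff]
    simp only [hden, or_false, neg_eq_zero, mul_eq_zero,
      pow_eq_zero_iff, sq_eq_zero_iff]
    constructor
    · rintro ((((h|h)|h)|h)|h)
      · exact absurd h ha
      · right; left; linarith
      · exact absurd h hsin
      · exact Or.inl h
      · exact Or.inr (Or.inr h)
    · rintro (h|h|h)
      · exact Or.inl (Or.inr h)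
      · refine Or.inl (Or.inl (Or.inl (Or.inr ?_)))
        rw [h]; ring
      · exact Or.inr h
  · intro h
    rw [accelQ2, h]
    simp
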